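/- arXiv:2605.07067 — 3 statements merged into one kernel-verified Lean document; each statement's English description precedes it below -/
import Mathlib

section
/- There exist a real 2×2 matrix M and orthogonal 2×2 matrices P and Q such that for every ε > 0, ρ_ε(P M Qᵀ) ≠ P · ρ_ε(M) · Qᵀ, where (ρ_ε(M))_{ij} := M_{ij}/(|M_{ij}| + ε). -/
/-!
The map `t ↦ t / (|t| + ε)` is not homogeneous: scaling a nonzero `t` by `c` commutes with it
only when `|c| = 1`. An orthogonal `P` with an entry `c = P k i`, `0 < |c| < 1`, moves a single
nonzero entry of `M` into position `(k, j)` scaled by `c`, so `ρ_ε(P M) ≠ P ρ_ε(M)` there.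
The rotation with entries `3/5, 4/5` is such a `P`.
-/

open Matrix

/-- The elementwise sign-like map `(ρ_ε(M))_{ij} = M_{ij}/(|M_{ij}| + ε)`,
modelling the AdamW preconditioned direction in the limiting case where the
second-moment estimate equals `|M_{ij}|`. -/
noncomputable def rho {n m : Type*} (ε : ℝ) (M : Matrix n m ℝ) : Matrix n m ℝ :=
  Matrix.of fun i j => M i j / (|M i j| + ε)

@[simp]
lemma rho_apply {n m : Type*} (ε : ℝ) (M : Matrix n m ℝ) (i : n) (j : m) :
    rho ε M i j = M i j / (|M i j| + ε) :=
  rfl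

lemma div_abs_add_mul_ne {ε c t : ℝ} (hε : 0 < ε) (hc₀ : c ≠ 0) (hc₁ : |c| ≠ 1) (ht : t ≠ 0) :
    c * t / (|c * t| + ε) ≠ c * (t / (|t| + ε)) := by
  have hct : 0 < |c * t| + ε := by positivity
  have htε : 0 < |t| + ε := by positivity
  intro h
  rw [mul_div_assoc, mul_right_inj' hc₀, div_eq_div_iff hct.ne' htε.ne', mul_right_inj' ht,
    add_left_inj, abs_mul] at h
  exact hc₁ (mul_eq_right₀ (abs_ne_zero.mpr ht) |>.mp h.symm)

lemma rho_single {n m : Type*} [DecidableEq n] [DecidableEq m] (ε : ℝ) (i : n) (j : m) (t : ℝ) :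
    rho ε (single i j t) = single i j (t / (|t| + ε)) := by
  ext k l
  by_cases h : i = k ∧ j = l
  · obtain ⟨rfl, rfl⟩ := h
    simp
  · simp [single_apply_of_ne (h := h)]

lemma rho_mul_single_ne {l n m : Type*} [Fintype n] [DecidableEq n] [DecidableEq m]
    {ε t : ℝ} (hε : 0 < ε) (ht : t ≠ 0) (P : Matrix l n ℝ) (k : l) (i : n) (j : m)
    (hP₀ : P k i ≠ 0) (hP₁ : |P k i| ≠ 1) :
    rho ε (P * single i j t) ≠ P * rho ε (single i j t) := by
  intro h
  have hkj := congrFun (congrFun h k) j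
  rw [rho_single, rho_apply, mul_single_apply_same, mul_single_apply_same] at hkj
  exact div_abs_add_mul_ne hε hP₀ hP₁ ht hkj

/-- AdamW is Schur gauge-dependent: there exist a real 2×2 matrix `M` and
orthogonal matrices `P`, `Q` such that `ρ_ε(P M Qᵀ) ≠ P · ρ_ε(M) · Qᵀ` for
every `ε > 0`. -/
theorem rho_not_orthogonal_equivariant :
    ∃ (M P Q : Matrix (Fin 2) (Fin 2) ℝ), Pᵀ * P = 1 ∧ Qᵀ * Q = 1 ∧
      ∀ ε : ℝ, 0 < ε → rho ε (P * M * Qᵀ) ≠ P * rho ε M * Qᵀ := by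
  refine ⟨single 0 0 1, !![3/5, -4/5; 4/5, 3/5], 1, ?_, by simp, fun ε hε => ?_⟩
  · ext i j
    fin_cases i <;> fin_cases j <;> norm_num [mul_apply, Fin.sum_univ_two]
  · simp only [transpose_one, Matrix.mul_one]
    exact rho_mul_single_ne hε one_ne_zero _ 0 0 0 (by norm_num) (by norm_num [abs_of_pos])
end

section
/- Let R := (1/√2) · [[1, -1], [1, 1]] be the 2×2 rotation matrix by angle π/4. Then R is orthogonal (RᵀR = I), and for every ε > 0, ρ_ε(R · I₂ · I₂ᵀ) ≠ R · ρ_ε(I₂) · I₂ᵀ, where (ρ_ε(M))_{ij} := M_{ij}/(|M_{ij}| + ε). -/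
open Matrix

/-- The 2×2 rotation matrix by angle `π/4`: `R = (1/√2) · [[1, -1], [1, 1]]`. -/
noncomputable def Rmat : Matrix (Fin 2) (Fin 2) ℝ :=
  (1 / Real.sqrt 2) • !![1, -1; 1, 1]

lemma sqrt2_pos : (0:ℝ) < Real.sqrt 2 := Real.sqrt_pos.mpr (by norm_num)

/-- The explicit `(P, M, Q) = (R, I₂, I₂)` instance of Schur
gauge-dependence of the elementwise sign-like map: `R` is orthogonal, and
`ρ_ε(R · I₂ · I₂ᵀ) ≠ R · ρ_ε(I₂) · I₂ᵀ` for every `ε > 0`. -/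
theorem rho_counterexample :
    Rmatᵀ * Rmat = 1 ∧
    ∀ ε : ℝ, 0 < ε →
      rho ε (Rmat * (1 : Matrix (Fin 2) (Fin 2) ℝ) * (1 : Matrix (Fin 2) (Fin 2) ℝ)ᵀ) ≠
        Rmat * rho ε (1 : Matrix (Fin 2) (Fin 2) ℝ) * (1 : Matrix (Fin 2) (Fin 2) ℝ)ᵀ := by
  have hs : Real.sqrt 2 * Real.sqrt 2 = 2 :=
    Real.mul_self_sqrt (by norm_num)
  constructor
  · ext i j
    fin_cases i <;> fin_cases j <;>
      simp [Rmat, Matrix.mul_apply, Fin.sum_univ_two, Matrix.one_apply, Matrix.transpose_apply, Matrix.vecHead, Matrix.vecTail] <;>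
      field_simp <;> nlinarith [hs, sqrt2_pos]
  · intro ε hε h
    have h00 := congrFun (congrFun h 0) 0
    have hc : (0:ℝ) < 1 / Real.sqrt 2 := by positivity
    simp [rho, Rmat, Matrix.mul_apply, Fin.sum_univ_two, Matrix.one_apply,
      Matrix.transpose_apply, Matrix.vecHead, Matrix.vecTail, abs_of_pos hc] at h00
    rw [abs_of_pos sqrt2_pos] at h00
    have h2 : Real.sqrt 2 ≠ 0 := ne_of_gt sqrt2_pos
    field_simp at h00
    nlinarith [sqrt2_pos, hs, hε]
end

section
/- Let A be a real n₁×m₁ matrix with AᵀA positive definite, B a real n₂×m₂ matrix with BᵀB positive definite, and d₁, d₂ positive natural numbers. Then the matrix G := fromBlocks (A ⊗ I_{d₁}) 0 0 (B ⊗ I_{d₂}) has GᵀG positive definite, and polar(G) = fromBlocks (polar(A) ⊗ I_{d₁}) 0 0 (polar(B) ⊗ I_{d₂}), where polar(X) := X · ((XᵀX)^{1/2})⁻¹ with (·)^{1/2} the unique positive semidefinite square root. -/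
open Matrix Kronecker

/-- The polar factor of a matrix `G` with `Gᵀ * G` positive definite:
`polar(G) = G · ((GᵀG)^{1/2})⁻¹`, where `(·)^{1/2}` is the unique positive
semidefinite square root. -/
noncomputable def polar {n m : Type*} [Fintype n] [Fintype m] [DecidableEq m]
    (G : Matrix n m ℝ) (h : (Gᵀ * G).PosDef) : Matrix n m ℝ :=
  G * ((h.posSemidef.1.eigenvectorUnitary : Matrix m m ℝ) *
    diagonal ((RCLike.ofReal : ℝ → ℝ) ∘ Real.sqrt ∘ h.posSemidef.1.eigenvalues) *
    (star h.posSemidef.1.eigenvectorUnitary : Matrix m m ℝ))⁻¹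

section SqrtAux

variable {n : Type*} [Fintype n] [DecidableEq n]

/-- The positive semidefinite square root, as in the definition of `polar`. -/
noncomputable def Matrix.PosSemidef.sqrt {M : Matrix n n ℝ} (h : M.PosSemidef) : Matrix n n ℝ :=
  (h.1.eigenvectorUnitary : Matrix n n ℝ) *
    diagonal ((RCLike.ofReal : ℝ → ℝ) ∘ Real.sqrt ∘ h.1.eigenvalues) *
    (star h.1.eigenvectorUnitary : Matrix n n ℝ)

open scoped MatrixOrder in
lemma Matrix.PosSemidef.sqrt_eq_cfc {M : Matrix n n ℝ} (h : M.PosSemidef) :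
    h.sqrt = CFC.sqrt M := by
  rw [CFC.sqrt_eq_real_sqrt M h.nonneg, cfcₙ_eq_cfc, h.1.cfc_eq, IsHermitian.cfc, Unitary.conjStarAlgAut_apply]
  rfl

open scoped MatrixOrder in
lemma Matrix.PosSemidef.sqrt_mul_self {M : Matrix n n ℝ} (h : M.PosSemidef) :
    h.sqrt * h.sqrt = M := by
  rw [h.sqrt_eq_cfc]
  exact CFC.sqrt_mul_sqrt_self M h.nonneg

open scoped MatrixOrder in
lemma Matrix.PosSemidef.posSemidef_sqrt {M : Matrix n n ℝ} (h : M.PosSemidef) :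
    h.sqrt.PosSemidef := by
  rw [h.sqrt_eq_cfc, ← Matrix.nonneg_iff_posSemidef]
  exact CFC.sqrt_nonneg M

open scoped MatrixOrder in
lemma Matrix.PosSemidef.eq_sqrt_of_sq_eq {S M : Matrix n n ℝ} (hS : S.PosSemidef)
    (hM : M.PosSemidef) (h : S ^ 2 = M) : S = hM.sqrt := by
  rw [hM.sqrt_eq_cfc]
  exact (CFC.sqrt_unique (by rw [← sq]; exact h) hS.nonneg).symm

lemma Matrix.posSemidef_iff_eq_transpose_mul_self {M : Matrix n n ℝ} :
    M.PosSemidef ↔ ∃ C : Matrix n n ℝ, M = Cᴴ * C := by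
  refine ⟨fun h => ⟨h.sqrt, ?_⟩, fun ⟨C, hC⟩ => hC ▸ Matrix.posSemidef_conjTranspose_mul_self C⟩
  rw [h.posSemidef_sqrt.1.eq, h.sqrt_mul_self]

end SqrtAux

section Aux

variable {n : Type*} [Fintype n] [DecidableEq n]

lemma aux_posDef_of_posSemidef_det_ne_zero {M : Matrix n n ℝ}
    (h : M.PosSemidef) (hd : M.det ≠ 0) : M.PosDef := by
  exact h.posDef_iff_det_ne_zero.mpr hd

lemma aux_kronecker_one_posSemidef {d : Type*} [Fintype d] [DecidableEq d]
    {M : Matrix n n ℝ} (hM : M.PosSemidef) :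
    (M ⊗ₖ (1 : Matrix d d ℝ)).PosSemidef := by
  obtain ⟨C, rfl⟩ := Matrix.posSemidef_iff_eq_transpose_mul_self.mp hM
  have h : (Cᴴ * C) ⊗ₖ (1 : Matrix d d ℝ) =
      (C ⊗ₖ (1 : Matrix d d ℝ))ᴴ * (C ⊗ₖ (1 : Matrix d d ℝ)) := by
    rw [Matrix.conjTranspose_eq_transpose_of_trivial,
      Matrix.conjTranspose_eq_transpose_of_trivial, ← Matrix.kroneckerMap_transpose,
      ← Matrix.mul_kronecker_mul, Matrix.transpose_one, one_mul]
  rw [h]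
  exact Matrix.posSemidef_conjTranspose_mul_self _

lemma aux_fromBlocks_posSemidef {m : Type*} [Fintype m] [DecidableEq m]
    {M : Matrix n n ℝ} {N : Matrix m m ℝ}
    (hM : M.PosSemidef) (hN : N.PosSemidef) :
    (fromBlocks M 0 0 N).PosSemidef := by
  obtain ⟨C, rfl⟩ := Matrix.posSemidef_iff_eq_transpose_mul_self.mp hM
  obtain ⟨D, rfl⟩ := Matrix.posSemidef_iff_eq_transpose_mul_self.mp hN
  have h : fromBlocks (Cᴴ * C) 0 0 (Dᴴ * D) =
      (fromBlocks C 0 0 D)ᴴ * fromBlocks C 0 0 D := by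
    rw [Matrix.fromBlocks_conjTranspose, Matrix.fromBlocks_multiply]
    simp
  rw [h]
  exact Matrix.posSemidef_conjTranspose_mul_self _

end Aux

/-- Two-irrep-type instance of `Polar respects direct sums`: for
`G = fromBlocks (A ⊗ I_{d₁}) 0 0 (B ⊗ I_{d₂})`, the Gram matrix `GᵀG` is
positive definite and `polar(G) = fromBlocks (polar(A) ⊗ I_{d₁}) 0 0
(polar(B) ⊗ I_{d₂})`. -/
theorem polar_fromBlocks_kronecker {n₁ m₁ n₂ m₂ : ℕ}
    (A : Matrix (Fin n₁) (Fin m₁) ℝ) (hA : (Aᵀ * A).PosDef)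
    (B : Matrix (Fin n₂) (Fin m₂) ℝ) (hB : (Bᵀ * B).PosDef)
    (d₁ d₂ : ℕ) (hd₁ : 0 < d₁) (hd₂ : 0 < d₂) :
    ∃ h : ((fromBlocks (A ⊗ₖ (1 : Matrix (Fin d₁) (Fin d₁) ℝ)) 0 0
              (B ⊗ₖ (1 : Matrix (Fin d₂) (Fin d₂) ℝ)))ᵀ *
            fromBlocks (A ⊗ₖ (1 : Matrix (Fin d₁) (Fin d₁) ℝ)) 0 0
              (B ⊗ₖ (1 : Matrix (Fin d₂) (Fin d₂) ℝ))).PosDef,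
      polar (fromBlocks (A ⊗ₖ (1 : Matrix (Fin d₁) (Fin d₁) ℝ)) 0 0
              (B ⊗ₖ (1 : Matrix (Fin d₂) (Fin d₂) ℝ))) h =
        fromBlocks (polar A hA ⊗ₖ (1 : Matrix (Fin d₁) (Fin d₁) ℝ)) 0 0
          (polar B hB ⊗ₖ (1 : Matrix (Fin d₂) (Fin d₂) ℝ)) := by
  set G := fromBlocks (A ⊗ₖ (1 : Matrix (Fin d₁) (Fin d₁) ℝ)) 0 0
      (B ⊗ₖ (1 : Matrix (Fin d₂) (Fin d₂) ℝ)) with hGdef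
  -- The Gram matrix in block/Kronecker form
  have hGram : Gᵀ * G = fromBlocks ((Aᵀ * A) ⊗ₖ (1 : Matrix (Fin d₁) (Fin d₁) ℝ)) 0 0
      ((Bᵀ * B) ⊗ₖ (1 : Matrix (Fin d₂) (Fin d₂) ℝ)) := by
    rw [hGdef, Matrix.fromBlocks_transpose, Matrix.fromBlocks_multiply,
      ← Matrix.kroneckerMap_transpose, ← Matrix.kroneckerMap_transpose,
      ← Matrix.mul_kronecker_mul, ← Matrix.mul_kronecker_mul, Matrix.transpose_one]
    simp
  -- Positive definiteness of the Gram matrix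
  have hPSD : (Gᵀ * G).PosSemidef := by
    rw [hGram]
    exact aux_fromBlocks_posSemidef (aux_kronecker_one_posSemidef hA.posSemidef)
      (aux_kronecker_one_posSemidef hB.posSemidef)
  have hdet : (Gᵀ * G).det ≠ 0 := by
    rw [hGram, Matrix.det_fromBlocks_zero₁₂, Matrix.det_kronecker, Matrix.det_kronecker]
    simp only [Matrix.det_one, one_pow, mul_one]
    exact ne_of_gt (mul_pos (pow_pos hA.det_pos _) (pow_pos hB.det_pos _))
  have hG : (Gᵀ * G).PosDef := aux_posDef_of_posSemidef_det_ne_zero hPSD hdet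
  refine ⟨hG, ?_⟩
  set SA := hA.posSemidef.sqrt with hSA
  set SB := hB.posSemidef.sqrt with hSB
  set S := fromBlocks (SA ⊗ₖ (1 : Matrix (Fin d₁) (Fin d₁) ℝ)) 0 0
      (SB ⊗ₖ (1 : Matrix (Fin d₂) (Fin d₂) ℝ)) with hSdef
  have hSsq : S ^ 2 = Gᵀ * G := by
    rw [pow_two, hSdef, Matrix.fromBlocks_multiply, ← Matrix.mul_kronecker_mul,
      ← Matrix.mul_kronecker_mul, hGram, Matrix.PosSemidef.sqrt_mul_self,
      Matrix.PosSemidef.sqrt_mul_self, one_mul]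
    simp
  have hS_psd : S.PosSemidef :=
    aux_fromBlocks_posSemidef
      (aux_kronecker_one_posSemidef hA.posSemidef.posSemidef_sqrt)
      (aux_kronecker_one_posSemidef hB.posSemidef.posSemidef_sqrt)
  have hSeq : S = hG.posSemidef.sqrt := hS_psd.eq_sqrt_of_sq_eq hG.posSemidef hSsq
  have hSAdet : SA.det ≠ 0 := by
    have h1 : SA.det * SA.det = (Aᵀ * A).det := by
      rw [← Matrix.det_mul, Matrix.PosSemidef.sqrt_mul_self]
    intro hc
    rw [hc, mul_zero] at h1
    exact hA.det_pos.ne' h1.symm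
  have hSBdet : SB.det ≠ 0 := by
    have h1 : SB.det * SB.det = (Bᵀ * B).det := by
      rw [← Matrix.det_mul, Matrix.PosSemidef.sqrt_mul_self]
    intro hc
    rw [hc, mul_zero] at h1
    exact hB.det_pos.ne' h1.symm
  have hST : S * fromBlocks (SA⁻¹ ⊗ₖ (1 : Matrix (Fin d₁) (Fin d₁) ℝ)) 0 0
      (SB⁻¹ ⊗ₖ (1 : Matrix (Fin d₂) (Fin d₂) ℝ)) = 1 := by
    rw [hSdef, Matrix.fromBlocks_multiply, ← Matrix.mul_kronecker_mul,
      ← Matrix.mul_kronecker_mul, Matrix.mul_nonsing_inv _ (isUnit_iff_ne_zero.mpr hSAdet),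
      Matrix.mul_nonsing_inv _ (isUnit_iff_ne_zero.mpr hSBdet), one_mul]
    simp [Matrix.fromBlocks_one]
  have hSinv : S⁻¹ = fromBlocks (SA⁻¹ ⊗ₖ (1 : Matrix (Fin d₁) (Fin d₁) ℝ)) 0 0
      (SB⁻¹ ⊗ₖ (1 : Matrix (Fin d₂) (Fin d₂) ℝ)) := Matrix.inv_eq_right_inv hST
  show G * (hG.posSemidef.sqrt)⁻¹ = _
  rw [← hSeq, hSinv, hGdef, Matrix.fromBlocks_multiply, ← Matrix.mul_kronecker_mul,
    ← Matrix.mul_kronecker_mul, one_mul]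
  simp [polar, hSA, hSB, Matrix.PosSemidef.sqrt]
end
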